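/- Let n ≥ 2, let x, y ∈ ℝⁿ be linearly independent vectors, and set u = ‖y‖, r = ‖x‖, s = ⟨x,y⟩/u, ŷ = y/u. Let φ > 0, L₁, L₂, ρ₀, ρ₁, ρ₂, ρ₃ be real numbers, define L₃ = −s³L₁ + 3sL₂, L₄ = −sL₂, L₅ = −sL₁, L₆ = s²L₁ − L₂, and define L_{jkl} = −(φ/2)[L₁ x_j x_k x_l + L₂(x_j δ_{kl} + x_k δ_{jl} + x_l δ_{jk}) + L₃ ŷ_j ŷ_k ŷ_l + L₄(ŷ_j δ_{kl} + ŷ_k δ_{jl} + ŷ_l δ_{jk}) + L₅(ŷ_j x_k x_l + ŷ_k x_j x_l + ŷ_l x_j x_k) + L₆(x_j ŷ_k ŷ_l + x_k ŷ_j ŷ_l + x_l ŷ_j ŷ_k)] and g^{jk} = ρ₀ δ_{jk} + ρ₁ ŷ_j ŷ_k + ρ₂(x_j ŷ_k + x_k ŷ_j) + ρ₃ x_j x_k. Then Σ_{j,k} L_{ijk} g^{jk} = 0 for every i if and only if (r² − s²)(ρ₀ + (r² − s²)ρ₃)L₁ + ((n+1)ρ₀ + 3(r² − s²)ρ₃)L₂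 = 0. -/

import Mathlib

/-!
Both tensors are built from `x`, `ŷ` and `δ`, so each component of `J = L_{ijk} g^{jk}` is a
combination of `x_i` and `ŷ_i` whose coefficients involve only `⟨x, x⟩ = r²`, `⟨x, ŷ⟩ = s`,
`⟨ŷ, ŷ⟩ = 1` and `tr δ = n`. The relations defining `L₃, …, L₆` make it collapse to
`J = -(φ / 2) E (x - s ŷ)`, where `E` is the stated expression, and `x - s ŷ ≠ 0` because `x` and
`y` are independent.
-/

namespace MeanLandsberg

open Matrix

variable {ι : Type*} [Fintype ι]

def contract : (ι → ι → ι → ℝ) →ₗ[ℝ] Matrix ι ι ℝ →ₗ[ℝ] ι → ℝ :=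
  LinearMap.mk₂ ℝ (fun T G i => ∑ j, ∑ k, T i j k * G j k)
    (fun _ _ _ => by ext; simp only [Pi.add_apply, add_mul, Finset.sum_add_distrib])
    (fun _ _ _ => by ext; simp only [Pi.smul_apply, smul_eq_mul, Finset.mul_sum, mul_assoc])
    (fun _ _ _ => by
      ext; simp only [Matrix.add_apply, Pi.add_apply, mul_add, Finset.sum_add_distrib])
    (fun _ _ _ => by
      ext; simp only [Matrix.smul_apply, Pi.smul_apply, smul_eq_mul, Finset.mul_sum, mul_left_comm])

theorem contract_vecMulVec_apply (T : ι → ι → ι → ℝ) (p q : ι → ℝ) (i : ι) :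
    contract T (vecMulVec p q) i = ∑ j, ∑ k, T i j k * p j * q k := by
  simp only [contract, LinearMap.mk₂_apply, vecMulVec_apply, mul_assoc]

theorem contract_one_apply [DecidableEq ι] (T : ι → ι → ι → ℝ) (i : ι) :
    contract T 1 i = ∑ j, T i j j := by
  simp [contract, Matrix.one_apply]

def outer3 (a b c : ι → ℝ) : ι → ι → ι → ℝ := fun i j k => a i * b j * c k

def symDelta [DecidableEq ι] (v : ι → ℝ) : ι → ι → ι → ℝ := fun i j k =>
  v i * (if j = k then 1 else 0) + v j * (if i = k then 1 else 0) + v k * (if i = j then 1 else 0)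

variable (a b c v p q : ι → ℝ)

theorem contract_outer3_one [DecidableEq ι] : contract (outer3 a b c) 1 = (b ⬝ᵥ c) • a := by
  ext i
  simp only [contract_one_apply, outer3, Pi.smul_apply, smul_eq_mul, dotProduct, Finset.sum_mul]
  exact Finset.sum_congr rfl fun j _ => by ring

theorem contract_outer3_vecMulVec :
    contract (outer3 a b c) (vecMulVec p q) = ((b ⬝ᵥ p) * (c ⬝ᵥ q)) • a := by
  ext i
  rw [Pi.smul_apply, smul_eq_mul, dotProduct, dotProduct, Finset.sum_mul_sum, Finset.sum_mul]
  simp only [contract_vecMulVec_apply, outer3, Finset.sum_mul]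
  exact Finset.sum_congr rfl fun j _ => Finset.sum_congr rfl fun k _ => by ring

theorem contract_symDelta_one [DecidableEq ι] :
    contract (symDelta v) 1 = (Fintype.card ι + 2 : ℝ) • v := by
  ext i
  simp only [contract_one_apply, symDelta, ↓reduceIte, mul_one, mul_ite, mul_zero,
    Finset.sum_add_distrib, Finset.sum_const, Finset.card_univ, nsmul_eq_mul, Finset.sum_ite_eq,
    Finset.mem_univ, Pi.smul_apply, smul_eq_mul]
  ring

theorem contract_symDelta_vecMulVec [DecidableEq ι] :
    contract (symDelta v) (vecMulVec p q) = (p ⬝ᵥ q) • v + (v ⬝ᵥ q) • p + (v ⬝ᵥ p) • q := by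
  ext i
  simp only [contract_vecMulVec_apply, symDelta, mul_ite, mul_one, mul_zero, add_mul, ite_mul,
    zero_mul, Finset.sum_add_distrib, Finset.sum_ite_eq, Finset.mem_univ, ↓reduceIte,
    Finset.sum_ite_irrel, Finset.sum_const_zero, dotProduct, Pi.add_apply, Pi.smul_apply,
    smul_eq_mul, Finset.sum_mul]
  simp only [← Finset.sum_add_distrib]
  exact Finset.sum_congr rfl fun j _ => by ring

def landsbergTensor [DecidableEq ι] (L₁ L₂ L₃ L₄ L₅ L₆ : ℝ) : ι → ι → ι → ℝ :=
  L₁ • outer3 a a a + L₂ • symDelta a + L₃ • outer3 b b b + L₄ • symDelta b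
    + L₅ • (outer3 b a a + outer3 a b a + outer3 a a b)
    + L₆ • (outer3 a b b + outer3 b a b + outer3 b b a)

def inverseMetric [DecidableEq ι] (ρ₀ ρ₁ ρ₂ ρ₃ : ℝ) : Matrix ι ι ℝ :=
  ρ₀ • 1 + ρ₁ • vecMulVec b b + ρ₂ • (vecMulVec a b + vecMulVec b a) + ρ₃ • vecMulVec a a

theorem contract_landsbergTensor_inverseMetric [DecidableEq ι] {R s : ℝ}
    (haa : a ⬝ᵥ a = R) (hab : a ⬝ᵥ b = s) (hbb : b ⬝ᵥ b = 1) (L₁ L₂ ρ₀ ρ₁ ρ₂ ρ₃ : ℝ) :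
    contract (landsbergTensor a b L₁ L₂ (-s ^ 3 * L₁ + 3 * s * L₂) (-s * L₂) (-s * L₁)
        (s ^ 2 * L₁ - L₂)) (inverseMetric a b ρ₀ ρ₁ ρ₂ ρ₃) =
      ((R - s ^ 2) * (ρ₀ + (R - s ^ 2) * ρ₃) * L₁
        + ((Fintype.card ι + 1) * ρ₀ + 3 * (R - s ^ 2) * ρ₃) * L₂) • (a - s • b) := by
  have hba : b ⬝ᵥ a = s := dotProduct_comm a b ▸ hab
  simp only [landsbergTensor, inverseMetric, map_add, map_smul, LinearMap.add_apply,
    LinearMap.smul_apply, contract_outer3_one, contract_outer3_vecMulVec, contract_symDelta_one,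
    contract_symDelta_vecMulVec, haa, hab, hba, hbb]
  module

end MeanLandsberg

theorem LinearIndependent.sub_smul_ne_zero {R M : Type*} [Ring R] [Nontrivial R] [AddCommGroup M]
    [Module R M] {x y : M} (h : LinearIndependent R ![x, y]) (c : R) : x - c • y ≠ 0 :=
  fun hc => one_ne_zero <|
    (LinearIndependent.pair_iff.mp h 1 (-c) (by rw [one_smul, neg_smul, ← sub_eq_add_neg, hc])).1

open MeanLandsberg Matrix

theorem EuclideanSpace.real_inner_eq_dotProduct {ι : Type*} [Fintype ι]
    (v w : EuclideanSpace ℝ ι) :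
    inner ℝ v w = v.ofLp ⬝ᵥ w.ofLp := by
  simp [EuclideanSpace.inner_eq_star_dotProduct, dotProduct_comm]

open EuclideanSpace

theorem stmt_3_general (n : ℕ) (x y : EuclideanSpace ℝ (Fin n))
    (hxy : LinearIndependent ℝ ![x, y])
    (u r s : ℝ) (hu : u = ‖y‖) (hr : r = ‖x‖) (hs : s = (inner ℝ x y : ℝ) / u)
    (φ L₁ L₂ ρ₀ ρ₁ ρ₂ ρ₃ L₃ L₄ L₅ L₆ : ℝ) (hφ : 0 < φ)
    (hL₃ : L₃ = -s ^ 3 * L₁ + 3 * s * L₂) (hL₄ : L₄ = -s * L₂)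
    (hL₅ : L₅ = -s * L₁) (hL₆ : L₆ = s ^ 2 * L₁ - L₂)
    (L : Fin n → Fin n → Fin n → ℝ)
    (hL : ∀ j k l, L j k l = -(φ / 2) *
      (L₁ * x j * x k * x l
        + L₂ * (x j * (if k = l then (1 : ℝ) else 0) + x k * (if j = l then (1 : ℝ) else 0)
            + x l * (if j = k then (1 : ℝ) else 0))
        + L₃ * (y j / u) * (y k / u) * (y l / u)
        + L₄ * ((y j / u) * (if k = l then (1 : ℝ) else 0)
            + (y k / u) * (if j = l then (1 : ℝ) else 0)
            + (y l / u) * (if j = k then (1 : ℝ) else 0))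
        + L₅ * ((y j / u) * x k * x l + (y k / u) * x j * x l + (y l / u) * x j * x k)
        + L₆ * (x j * (y k / u) * (y l / u) + x k * (y j / u) * (y l / u)
            + x l * (y j / u) * (y k / u))))
    (ginv : Fin n → Fin n → ℝ)
    (hginv : ∀ j k, ginv j k = ρ₀ * (if j = k then (1 : ℝ) else 0)
      + ρ₁ * (y j / u) * (y k / u) + ρ₂ * (x j * (y k / u) + x k * (y j / u))
      + ρ₃ * x j * x k) :
    (∀ i, (∑ j, ∑ k, L i j k * ginv j k) = 0) ↔
      (r ^ 2 - s ^ 2) * (ρ₀ + (r ^ 2 - s ^ 2) * ρ₃) * L₁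
        + (((n : ℝ) + 1) * ρ₀ + 3 * (r ^ 2 - s ^ 2) * ρ₃) * L₂ = 0 := by
  have hu₀ : u ≠ 0 := hu ▸ norm_ne_zero_iff.mpr (by simpa using hxy.ne_zero 1)
  set a : Fin n → ℝ := x.ofLp
  set b : Fin n → ℝ := u⁻¹ • y.ofLp
  have haa : a ⬝ᵥ a = r ^ 2 := by
    rw [← real_inner_eq_dotProduct, real_inner_self_eq_norm_sq, hr]
  have hab : a ⬝ᵥ b = s := by
    rw [dotProduct_smul, ← real_inner_eq_dotProduct, hs, smul_eq_mul, inv_mul_eq_div]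
  have hbb : b ⬝ᵥ b = 1 := by
    rw [dotProduct_smul, smul_dotProduct, ← real_inner_eq_dotProduct, real_inner_self_eq_norm_sq,
      ← hu, smul_eq_mul, smul_eq_mul]
    field_simp
  have hL' : L = (-(φ / 2)) • landsbergTensor a b L₁ L₂ L₃ L₄ L₅ L₆ := by
    ext i j k
    simp only [hL, landsbergTensor, outer3, symDelta, Pi.add_apply, Pi.smul_apply, smul_eq_mul,
      a, b]
    ring
  have hginv' : ginv = inverseMetric a b ρ₀ ρ₁ ρ₂ ρ₃ := by
    ext j k
    simp only [hginv, inverseMetric, Matrix.add_apply, Matrix.smul_apply, Matrix.one_apply,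
      vecMulVec_apply, Pi.smul_apply, smul_eq_mul, a, b]
    ring
  have hv : a - s • b ≠ 0 := by
    simpa [a, b, smul_smul] using (WithLp.ofLp_injective 2).ne (hxy.sub_smul_ne_zero (s * u⁻¹))
  have hJ : contract L ginv = (-(φ / 2)) • ((r ^ 2 - s ^ 2) * (ρ₀ + (r ^ 2 - s ^ 2) * ρ₃) * L₁
      + (((n : ℝ) + 1) * ρ₀ + 3 * (r ^ 2 - s ^ 2) * ρ₃) * L₂) • (a - s • b) := by
    subst hL₃ hL₄ hL₅ hL₆
    rw [hL', hginv', map_smul, LinearMap.smul_apply,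
      contract_landsbergTensor_inverseMetric a b haa hab hbb, Fintype.card_fin]
  refine (funext_iff (f := contract L ginv) (g := 0)).symm.trans ?_
  rw [hJ]
  simp [hv, hφ.ne']

/-- Proposition 2.3: for linearly independent `x, y`, the mean Landsberg
curvature `J_i = Σ_{j,k} L_{ijk} g^{jk}` vanishes for every `i` if and only if
`(r² − s²)(ρ₀ + (r² − s²)ρ₃)L₁ + ((n+1)ρ₀ + 3(r² − s²)ρ₃)L₂ = 0`. -/
theorem stmt_3 (n : ℕ) (hn : 2 ≤ n) (x y : EuclideanSpace ℝ (Fin n))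
    (hxy : LinearIndependent ℝ ![x, y])
    (u r s : ℝ) (hu : u = ‖y‖) (hr : r = ‖x‖) (hs : s = (inner ℝ x y : ℝ) / u)
    (φ L₁ L₂ ρ₀ ρ₁ ρ₂ ρ₃ L₃ L₄ L₅ L₆ : ℝ) (hφ : 0 < φ)
    (hL₃ : L₃ = -s ^ 3 * L₁ + 3 * s * L₂) (hL₄ : L₄ = -s * L₂)
    (hL₅ : L₅ = -s * L₁) (hL₆ : L₆ = s ^ 2 * L₁ - L₂)
    (L : Fin n → Fin n → Fin n → ℝ)
    (hL : ∀ j k l, L j k l = -(φ / 2) *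
      (L₁ * x j * x k * x l
        + L₂ * (x j * (if k = l then (1 : ℝ) else 0) + x k * (if j = l then (1 : ℝ) else 0)
            + x l * (if j = k then (1 : ℝ) else 0))
        + L₃ * (y j / u) * (y k / u) * (y l / u)
        + L₄ * ((y j / u) * (if k = l then (1 : ℝ) else 0)
            + (y k / u) * (if j = l then (1 : ℝ) else 0)
            + (y l / u) * (if j = k then (1 : ℝ) else 0))
        + L₅ * ((y j / u) * x k * x l + (y k / u) * x j * x l + (y l / u) * x j * x k)
        + L₆ * (x j * (y k / u) * (y l / u) + x k * (y j / u) * (y l / u)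
            + x l * (y j / u) * (y k / u))))
    (ginv : Fin n → Fin n → ℝ)
    (hginv : ∀ j k, ginv j k = ρ₀ * (if j = k then (1 : ℝ) else 0)
      + ρ₁ * (y j / u) * (y k / u) + ρ₂ * (x j * (y k / u) + x k * (y j / u))
      + ρ₃ * x j * x k) :
    (∀ i, (∑ j, ∑ k, L i j k * ginv j k) = 0) ↔
      (r ^ 2 - s ^ 2) * (ρ₀ + (r ^ 2 - s ^ 2) * ρ₃) * L₁
        + (((n : ℝ) + 1) * ρ₀ + 3 * (r ^ 2 - s ^ 2) * ρ₃) * L₂ = 0 :=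
  stmt_3_general n x y hxy u r s hu hr hs φ L₁ L₂ ρ₀ ρ₁ ρ₂ ρ₃ L₃ L₄ L₅ L₆ hφ hL₃ hL₄ hL₅ hL₆ L hL
    ginv hginv
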